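/- A class of ordered Σ-algebras is closed under homomorphic images (codomains of surjective monotone Σ-homomorphisms with domain in the class), subalgebras (sub-Σ-algebras carrying the induced order), and products of arbitrary set-indexed families of its members, if and only if it is axiomatizable by term inequations: there is a class of term inequations (over arbitrary variable sets) such that an ordered Σ-algebra belongs to the class if and only if it satisfies every one of these inequations. -/
import Mathlib


universe u

/-- Σ-terms over a set `X` of variables, for the signature with operation symbols `S`
and arity function `ar`. -/
inductive Term (S : Type u) (ar : S → ℕ) (X : Type u) : Type u
  | var : X → Term S ar X
  | op : (s : S) → (Fin (ar s) → Term S ar X) → Term S ar X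

/-- An ordered Σ-algebra: a partially ordered set with monotone `ar s`-ary
operations. -/
structure OrdAlg (S : Type u) (ar : S → ℕ) : Type (u + 1) where
  carrier : Type u
  po : PartialOrder carrier
  op : (s : S) → (Fin (ar s) → carrier) → carrier
  op_mono : ∀ (s : S) (v w : Fin (ar s) → carrier),
      (∀ i, po.le (v i) (w i)) → po.le (op s v) (op s w)

variable {S : Type u} {ar : S → ℕ}

/-- The unique homomorphic extension `h#` of `h : X → A` to the term algebra. -/
def OrdAlg.eval (A : OrdAlg S ar) {X : Type u} (h : X → A.carrier) :
    Term S ar X → A.carrier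
  | Term.var x => h x
  | Term.op s v => A.op s fun i => A.eval h (v i)

/-- A monotone Σ-homomorphism of ordered Σ-algebras. -/
def OrdHom (A B : OrdAlg S ar) (f : A.carrier → B.carrier) : Prop :=
  (∀ (s : S) (v : Fin (ar s) → A.carrier), f (A.op s v) = B.op s fun i => f (v i)) ∧
  (∀ x y : A.carrier, A.po.le x y → B.po.le (f x) (f y))

/-- An ordered Σ-algebra satisfies the term inequation `s ≤ t` over `X` if all
evaluations are related. -/
def OrdAlg.SatisfiesLE (A : OrdAlg S ar) {X : Type u} (s t : Term S ar X) : Prop :=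
  ∀ h : X → A.carrier, A.po.le (A.eval h s) (A.eval h t)

/-- The product of a family of ordered Σ-algebras, with pointwise order and
operations. -/
def prodOrdAlg {I : Type u} (f : I → OrdAlg S ar) : OrdAlg S ar where
  carrier := ∀ i, (f i).carrier
  po :=
    { le := fun x y => ∀ i, (f i).po.le (x i) (y i)
      le_refl := fun x i => (f i).po.le_refl (x i)
      le_trans := fun x y z hxy hyz i => (f i).po.le_trans _ _ _ (hxy i) (hyz i)
      le_antisymm := fun x y hxy hyx => funext fun i => (f i).po.le_antisymm _ _ (hxy i) (hyx i) }
  op := fun s v i => (f i).op s fun j => v j i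
  op_mono := fun s v w h i => (f i).op_mono s _ _ fun j => h j i


lemma eval_hom (A B : OrdAlg S ar) (f : A.carrier → B.carrier)
    (hf : ∀ (s : S) (v : Fin (ar s) → A.carrier), f (A.op s v) = B.op s fun i => f (v i))
    {X : Type u} (h : X → A.carrier) : ∀ t, f (A.eval h t) = B.eval (fun x => f (h x)) t
  | Term.var _ => rfl
  | Term.op s v => by
      show f (A.op s _) = B.op s _
      rw [hf]
      exact congrArg _ (funext fun i => eval_hom A B f hf h (v i))

def KRel (K : Set (OrdAlg S ar)) {X : Type u} (s t : Term S ar X) : Prop :=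
  ∀ A ∈ K, A.SatisfiesLE s t

lemma KRel.refl (K : Set (OrdAlg S ar)) {X : Type u} (s : Term S ar X) : KRel K s s :=
  fun A _ h => A.po.le_refl _

lemma KRel.trans {K : Set (OrdAlg S ar)} {X : Type u} {s t u : Term S ar X}
    (h1 : KRel K s t) (h2 : KRel K t u) : KRel K s u :=
  fun A hA h => A.po.le_trans _ _ _ (h1 A hA h) (h2 A hA h)

lemma KRel.op {K : Set (OrdAlg S ar)} {X : Type u} {s : S}
    {v w : Fin (ar s) → Term S ar X} (h : ∀ i, KRel K (v i) (w i)) :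
    KRel K (Term.op s v) (Term.op s w) := fun A hA g =>
  A.op_mono s _ _ fun i => h i A hA g

def termSetoid (K : Set (OrdAlg S ar)) (X : Type u) : Setoid (Term S ar X) where
  r s t := KRel K s t ∧ KRel K t s
  iseqv := ⟨fun s => ⟨KRel.refl K s, KRel.refl K s⟩, fun h => ⟨h.2, h.1⟩,
    fun h h' => ⟨h.1.trans h'.1, h'.2.trans h.2⟩⟩

/-- KRel is invariant under passing to `out` of `mk`. -/
lemma krel_out_mk (K : Set (OrdAlg S ar)) {X : Type u} (s t : Term S ar X) :
    KRel K (Quotient.out (Quotient.mk (termSetoid K X) s))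
      (Quotient.out (Quotient.mk (termSetoid K X) t)) ↔ KRel K s t := by
  have hs := Quotient.mk_out (s := termSetoid K X) s
  have ht := Quotient.mk_out (s := termSetoid K X) t
  constructor
  · exact fun h => (hs.2.trans h).trans ht.1
  · exact fun h => (hs.1.trans h).trans ht.2

noncomputable def FreeAlg (K : Set (OrdAlg S ar)) (X : Type u) : OrdAlg S ar where
  carrier := Quotient (termSetoid K X)
  po :=
  { le := fun a b => KRel K a.out b.out
    le_refl := fun a => KRel.refl K a.out
    le_trans := fun _ _ _ h1 h2 => KRel.trans h1 h2
    le_antisymm := fun a b h1 h2 => by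
      have : Quotient.mk (termSetoid K X) a.out = Quotient.mk (termSetoid K X) b.out :=
        Quotient.sound ⟨h1, h2⟩
      rwa [Quotient.out_eq, Quotient.out_eq] at this }
  op := fun s v => Quotient.mk _ (Term.op s fun i => (v i).out)
  op_mono := fun s v w h => by
    show KRel K (Quotient.out (Quotient.mk _ _)) (Quotient.out (Quotient.mk _ _))
    rw [krel_out_mk]
    exact KRel.op h

lemma freeAlg_le {K : Set (OrdAlg S ar)} {X : Type u} (a b : (FreeAlg K X).carrier) :
    (FreeAlg K X).po.le a b ↔ KRel K a.out b.out := Iff.rfl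

lemma eval_out_mk (K : Set (OrdAlg S ar)) {X : Type u} (A : OrdAlg S ar)
    (hA : ∀ s t : Term S ar X, KRel K s t → A.SatisfiesLE s t)
    (h : X → A.carrier) (t : Term S ar X) :
    A.eval h (Quotient.out (Quotient.mk (termSetoid K X) t)) = A.eval h t := by
  have ht := Quotient.mk_out (s := termSetoid K X) t
  exact A.po.le_antisymm _ _ (hA _ _ ht.1 h) (hA _ _ ht.2 h)

/-- The canonical homomorphism out of the free algebra. -/
noncomputable def freeMap (K : Set (OrdAlg S ar)) {X : Type u} (A : OrdAlg S ar)
    (h : X → A.carrier) (q : (FreeAlg K X).carrier) : A.carrier :=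
  A.eval h q.out

lemma freeMap_op (K : Set (OrdAlg S ar)) {X : Type u} (A : OrdAlg S ar)
    (hA : ∀ s t : Term S ar X, KRel K s t → A.SatisfiesLE s t)
    (h : X → A.carrier) (s : S) (v : Fin (ar s) → (FreeAlg K X).carrier) :
    freeMap K A h ((FreeAlg K X).op s v) = A.op s fun i => freeMap K A h (v i) := by
  show A.eval h (Quotient.out (Quotient.mk (termSetoid K X) _)) = _
  rw [eval_out_mk K A hA h]
  rfl

lemma freeMap_mono (K : Set (OrdAlg S ar)) {X : Type u} (A : OrdAlg S ar)
    (hA : ∀ s t : Term S ar X, KRel K s t → A.SatisfiesLE s t)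
    (h : X → A.carrier) (a b : (FreeAlg K X).carrier) (hab : (FreeAlg K X).po.le a b) :
    A.po.le (freeMap K A h a) (freeMap K A h b) :=
  hA _ _ hab h

/-- The free algebra lies in any class closed under subalgebras and products. -/
lemma freeAlg_mem (K : Set (OrdAlg S ar))
    (hS : ∀ B ∈ K, ∀ A : OrdAlg S ar,
        (∃ f : A.carrier → B.carrier,
          (∀ (s : S) (v : Fin (ar s) → A.carrier), f (A.op s v) = B.op s fun i => f (v i)) ∧
          (∀ x y : A.carrier, A.po.le x y ↔ B.po.le (f x) (f y))) → A ∈ K)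
    (hP : ∀ (I : Type u) (f : I → OrdAlg S ar), (∀ i, f i ∈ K) → prodOrdAlg f ∈ K)
    (X : Type u) : FreeAlg K X ∈ K := by
  classical
  have hex : ∀ p : {p : Term S ar X × Term S ar X // ¬ KRel K p.1 p.2},
      ∃ A, A ∈ K ∧ ∃ h : X → A.carrier, ¬ A.po.le (A.eval h p.1.1) (A.eval h p.1.2) := by
    rintro ⟨⟨t1, t2⟩, hp⟩
    simp only [KRel, OrdAlg.SatisfiesLE, not_forall] at hp
    obtain ⟨A, hA, h, hh⟩ := hp
    exact ⟨A, hA, h, hh⟩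
  choose W hWK h hW using hex
  have hprod := hP _ W hWK
  refine hS _ hprod (FreeAlg K X) ⟨fun q p => freeMap K (W p) (h p) q, ?_, ?_⟩
  · intro s v
    funext p
    exact freeMap_op K (W p) (fun s t hst => hst (W p) (hWK p)) (h p) s v
  · intro a b
    constructor
    · intro hab p
      exact freeMap_mono K (W p) (fun s t hst => hst (W p) (hWK p)) (h p) a b hab
    · intro hab
      show KRel K a.out b.out
      by_contra hc
      exact hW ⟨(a.out, b.out), hc⟩ (hab ⟨(a.out, b.out), hc⟩)

/-- **Bloom's HSP Theorem for ordered algebras**: a class of ordered Σ-algebras is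
closed under homomorphic images, subalgebras (with the induced order) and products
iff it is axiomatizable by term inequations. -/
theorem bloom_hsp (S : Type u) (ar : S → ℕ) (K : Set (OrdAlg S ar)) :
    ((∀ A ∈ K, ∀ B : OrdAlg S ar,
        (∃ f : A.carrier → B.carrier, OrdHom A B f ∧ Function.Surjective f) → B ∈ K) ∧
     (∀ B ∈ K, ∀ A : OrdAlg S ar,
        (∃ f : A.carrier → B.carrier,
          (∀ (s : S) (v : Fin (ar s) → A.carrier), f (A.op s v) = B.op s fun i => f (v i)) ∧
          (∀ x y : A.carrier, A.po.le x y ↔ B.po.le (f x) (f y))) → A ∈ K) ∧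
     (∀ (I : Type u) (f : I → OrdAlg S ar), (∀ i, f i ∈ K) → prodOrdAlg f ∈ K)) ↔
    ∃ Ineqs : Set (Σ X : Type u, Term S ar X × Term S ar X),
      ∀ A : OrdAlg S ar, A ∈ K ↔ ∀ p ∈ Ineqs, A.SatisfiesLE p.2.1 p.2.2 := by
  constructor
  · rintro ⟨hH, hS, hP⟩
    refine ⟨{p | ∀ A ∈ K, A.SatisfiesLE p.2.1 p.2.2},
      fun A => ⟨fun hA p hp => hp A hA, fun hA => ?_⟩⟩
    have hfree := freeAlg_mem K hS hP A.carrier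
    have hA' : ∀ s t : Term S ar A.carrier, KRel K s t → A.SatisfiesLE s t :=
      fun s t hst => hA ⟨A.carrier, (s, t)⟩ hst
    refine hH _ hfree A ⟨freeMap K A id, ⟨freeMap_op K A hA' id,
      fun x y => freeMap_mono K A hA' id x y⟩, fun a => ⟨Quotient.mk _ (Term.var a), ?_⟩⟩
    show A.eval id (Quotient.out (Quotient.mk _ (Term.var a))) = a
    rw [eval_out_mk K A hA' id]
    rfl
  · rintro ⟨Ineqs, hI⟩
    refine ⟨?_, ?_, ?_⟩
    · rintro A hA B ⟨f, hf, fsurj⟩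
      rw [hI B]
      intro p hp h
      obtain ⟨g, hg⟩ : ∃ g : p.1 → A.carrier, ∀ x, f (g x) = h x :=
        ⟨fun x => (fsurj (h x)).choose, fun x => (fsurj (h x)).choose_spec⟩
      have he : ∀ t, f (A.eval g t) = B.eval h t := by
        intro t
        rw [eval_hom A B f hf.1 g t]
        congr 1
        funext x
        exact hg x
      rw [← he, ← he]
      exact hf.2 _ _ ((hI A).1 hA p hp g)
    · rintro B hB A ⟨f, fop, ford⟩
      rw [hI A]
      intro p hp h
      rw [ford, eval_hom A B f fop h, eval_hom A B f fop h]
      exact (hI B).1 hB p hp _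
    · intro I f hf
      rw [hI]
      intro p hp h i
      have he : ∀ t, (prodOrdAlg f).eval h t i = (f i).eval (fun x => h x i) t :=
        fun t => eval_hom (prodOrdAlg f) (f i) (fun x => x i) (fun s v => rfl) h t
      show (f i).po.le _ _
      rw [he, he]
      exact (hI (f i)).1 (hf i) p hp _
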